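/- arXiv:math/0202083 — 2 statements merged into one kernel-verified Lean document; each statement's English description precedes it below -/
import Mathlib

section
/- Let n ≥ 1, t₀ ∈ ℝ, and let A : [t₀, ∞) → M_n(ℂ) be a continuous matrix-valued function such that (i) for every t ≥ t₀ the improper Riemann integral Ã(t) := lim_{T→∞} ∫_t^T A(s) ds exists (entrywise), and (ii) the function t ↦ A(t)·Ã(t) is integrable on [t₀, ∞). If x : [t₀, ∞) → ℂⁿ is differentiable, satisfies x′(t) = A(t) x(t) for all t ≥ t₀, and x(t₀) ≠ 0, then lim_{t→∞} x(t) exists and is different from 0. -/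
/-!
Write `Ã(t) = ∫_t^∞ A`, so that `Ã' = -A` and `Ã → 0`. For large `t` the operator `1 - Ã(t)` is
invertible with inverse of norm at most `2`, and the Levinson substitution `x = (1 - Ã) y` turns
`x' = A x` into `y' = -(1 - Ã)⁻¹ A Ã y`, whose coefficient is integrable. Once the total mass of
that coefficient is below `1/4`, `y` stays within a third of `‖y(a)‖` of its initial value and
converges, so its limit is nonzero as soon as `y(a) ≠ 0`; that holds because solutions of
`x' = A x` with `x(t₀) ≠ 0` never vanish. Finally `x = (1 - Ã) y` has the same limit as `y`.
-/

open MeasureTheory Filter Set Matrix Topology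

section TailIntegral

variable {F : Type*} [NormedAddCommGroup F] [NormedSpace ℝ F] {f B : ℝ → F} {a : ℝ}

theorem eq_sub_intervalIntegral_of_tendsto_intervalIntegral (hf : ContinuousOn f (Ici a))
    (hB : ∀ t ∈ Ici a, Tendsto (fun T => ∫ s in t..T, f s) atTop (𝓝 (B t)))
    {t : ℝ} (ht : a ≤ t) : B t = B a - ∫ s in a..t, f s := by
  have hint : ∀ b c, a ≤ b → a ≤ c → IntervalIntegrable f volume b c := fun b c hb hc =>
    (hf.mono fun s hs => (le_min hb hc).trans hs.1).intervalIntegrable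
  refine eq_sub_of_add_eq' (tendsto_nhds_unique ?_ (hB a self_mem_Ici))
  refine (tendsto_const_nhds.add (hB t ht)).congr' ?_
  filter_upwards [eventually_ge_atTop t] with T hT
  exact intervalIntegral.integral_add_adjacent_intervals (hint a t le_rfl ht)
    (hint t T ht (ht.trans hT))

theorem hasDerivAt_of_tendsto_intervalIntegral [CompleteSpace F] (hf : ContinuousOn f (Ici a))
    (hB : ∀ t ∈ Ici a, Tendsto (fun T => ∫ s in t..T, f s) atTop (𝓝 (B t)))
    {t : ℝ} (ht : a < t) : HasDerivAt B (-f t) t := by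
  have hFTC : HasDerivAt (fun s => ∫ u in a..s, f u) (f t) t :=
    intervalIntegral.integral_hasDerivAt_right
      ((hf.mono Icc_subset_Ici_self).intervalIntegrable_of_Icc ht.le)
      ((hf.mono Ioi_subset_Ici_self).stronglyMeasurableAtFilter isOpen_Ioi t ht)
      (hf.continuousAt (Ici_mem_nhds ht))
  refine (hFTC.const_sub (B a)).congr_of_eventuallyEq ?_
  filter_upwards [Ici_mem_nhds ht] with s hs
  exact eq_sub_intervalIntegral_of_tendsto_intervalIntegral hf hB hs

theorem tendsto_zero_of_tendsto_intervalIntegral (hf : ContinuousOn f (Ici a))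
    (hB : ∀ t ∈ Ici a, Tendsto (fun T => ∫ s in t..T, f s) atTop (𝓝 (B t))) :
    Tendsto B atTop (𝓝 0) := by
  have h := (tendsto_const_nhds (x := B a)).sub (hB a self_mem_Ici)
  rw [sub_self] at h
  refine h.congr' ?_
  filter_upwards [eventually_ge_atTop a] with t ht
  exact (eq_sub_intervalIntegral_of_tendsto_intervalIntegral hf hB ht).symm

end TailIntegral

section IntegrableCoefficient

variable {E : Type*} [NormedAddCommGroup E] [NormedSpace ℝ E] [CompleteSpace E]
  {y g : ℝ → E} {k : ℝ → ℝ} {a : ℝ}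

theorem integrableOn_of_hasDerivAt_of_norm_le {s : Set ℝ} (hs : MeasurableSet s)
    (hy : ∀ t ∈ s, HasDerivAt y (g t) t) (hgk : ∀ t ∈ s, ‖g t‖ ≤ k t)
    (hk : IntegrableOn k s) : IntegrableOn g s := by
  have hg : AEStronglyMeasurable g (volume.restrict s) :=
    (aestronglyMeasurable_deriv y _).congr <|
      (ae_restrict_mem hs).mono fun t ht => (hy t ht).deriv
  exact hk.mono' hg ((ae_restrict_mem hs).mono hgk)

theorem norm_sub_le_of_hasDerivAt_of_norm_le_mul (hy : ∀ t ∈ Ici a, HasDerivAt y (g t) t)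
    (hgk : ∀ t ∈ Ici a, ‖g t‖ ≤ k t * ‖y t‖) (hk0 : ∀ t ∈ Ici a, 0 ≤ k t)
    (hk : IntegrableOn k (Ici a)) {M T : ℝ} (hT : a ≤ T) (hM : ∀ t ∈ Icc a T, ‖y t‖ ≤ M) :
    ‖y T - y a‖ ≤ M * ∫ t in Ici a, k t := by
  have hM0 : 0 ≤ M := (norm_nonneg _).trans (hM a ⟨le_rfl, hT⟩)
  have hkM : IntegrableOn (fun t => k t * M) (Icc a T) :=
    (hk.mono_set Icc_subset_Ici_self).mul_const M
  have hgkM : ∀ t ∈ Icc a T, ‖g t‖ ≤ k t * M := fun t ht =>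
    (hgk t ht.1).trans (mul_le_mul_of_nonneg_left (hM t ht) (hk0 t ht.1))
  have hg : IntervalIntegrable g volume a T :=
    (intervalIntegrable_iff_integrableOn_Icc_of_le hT).2 <|
      integrableOn_of_hasDerivAt_of_norm_le measurableSet_Icc
        (fun t ht => hy t ht.1) hgkM hkM
  have hFTC : y T - y a = ∫ t in a..T, g t :=
    (intervalIntegral.integral_eq_sub_of_hasDerivAt
      (fun t ht => hy t (by rw [uIcc_of_le hT] at ht; exact ht.1)) hg).symm
  have hk_le : ∫ t in a..T, k t ≤ ∫ t in Ici a, k t := by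
    rw [intervalIntegral.integral_of_le hT]
    exact setIntegral_mono_set hk ((ae_restrict_mem measurableSet_Ici).mono hk0)
      (Ioc_subset_Icc_self.trans Icc_subset_Ici_self).eventuallyLE
  calc ‖y T - y a‖ ≤ ∫ t in a..T, k t * M := by
        rw [hFTC]
        exact intervalIntegral.norm_integral_le_of_norm_le hT
          (Eventually.of_forall fun t ht => hgkM t (Ioc_subset_Icc_self ht))
          ((intervalIntegrable_iff_integrableOn_Icc_of_le hT).2 hkM)
    _ = M * ∫ t in a..T, k t := by rw [intervalIntegral.integral_mul_const, mul_comm]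
    _ ≤ M * ∫ t in Ici a, k t := mul_le_mul_of_nonneg_left hk_le hM0

theorem exists_tendsto_of_hasDerivAt_of_norm_le_mul
    (hy : ∀ t ∈ Ici a, HasDerivAt y (g t) t) (hgk : ∀ t ∈ Ici a, ‖g t‖ ≤ k t * ‖y t‖)
    (hk0 : ∀ t ∈ Ici a, 0 ≤ k t) (hk : IntegrableOn k (Ici a))
    (hk_small : ∫ t in Ici a, k t ≤ 1 / 4) :
    ∃ L, Tendsto y atTop (𝓝 L) ∧ ‖L - y a‖ ≤ ‖y a‖ / 3 := by
  -- The maximum `M` of `‖y‖` on `[a, T]` satisfies `M ≤ ‖y a‖ + M / 4`.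
  have hbound : ∀ T, a ≤ T → ‖y T‖ ≤ 4 / 3 * ‖y a‖ := by
    intro T hT
    have hcont : ContinuousOn (fun t => ‖y t‖) (Icc a T) := fun t ht =>
      (hy t ht.1).continuousAt.norm.continuousWithinAt
    obtain ⟨m, hm, hmax⟩ := isCompact_Icc.exists_isMaxOn (nonempty_Icc.2 hT) hcont
    have hmax' : ∀ t ∈ Icc a T, ‖y t‖ ≤ ‖y m‖ := fun t ht => hmax ht
    have h := norm_sub_le_of_hasDerivAt_of_norm_le_mul hy hgk hk0 hk hm.1
      fun t ht => hmax' t ⟨ht.1, ht.2.trans hm.2⟩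
    have := norm_sub_norm_le (y m) (y a)
    have := mul_le_mul_of_nonneg_left hk_small (norm_nonneg (y m))
    linarith [hmax' T ⟨hT, le_rfl⟩]
  have hclose : ∀ T, a ≤ T → ‖y T - y a‖ ≤ ‖y a‖ / 3 := by
    intro T hT
    have h := norm_sub_le_of_hasDerivAt_of_norm_le_mul hy hgk hk0 hk hT
      fun t ht => hbound t ht.1
    have := mul_le_mul_of_nonneg_left hk_small (by positivity : 0 ≤ 4 / 3 * ‖y a‖)
    linarith
  have hg : IntegrableOn g (Ioi a) :=
    integrableOn_of_hasDerivAt_of_norm_le measurableSet_Ioi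
      (fun t ht => hy t (mem_Ici_of_Ioi ht))
      (fun t ht => (hgk t (mem_Ici_of_Ioi ht)).trans
        (mul_le_mul_of_nonneg_left (hbound t (le_of_lt ht)) (hk0 t (mem_Ici_of_Ioi ht))))
      ((hk.mono_set Ioi_subset_Ici_self).mul_const _)
  have hlim := tendsto_limUnder_of_hasDerivAt_of_integrableOn_Ioi
    (fun t ht => hy t (mem_Ici_of_Ioi ht)) hg
  refine ⟨_, hlim, le_of_tendsto ((hlim.sub_const (y a)).norm) ?_⟩
  filter_upwards [eventually_ge_atTop a] with T hT
  exact hclose T hT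

end IntegrableCoefficient

theorem HasDerivAt.ringInverse {𝕜 R : Type*} [NontriviallyNormedField 𝕜] [NormedRing R]
    [NormedAlgebra 𝕜 R] [HasSummableGeomSeries R] {P : 𝕜 → R} {P' : R} {t : 𝕜}
    (hP : HasDerivAt P P' t) (hPt : IsUnit (P t)) :
    HasDerivAt (fun s => Ring.inverse (P s))
      (-(Ring.inverse (P t) * P' * Ring.inverse (P t))) t := by
  obtain ⟨u, hu⟩ := hPt
  have hF := hasFDerivAt_ringInverse (𝕜 := 𝕜) u
  rw [hu] at hF
  rw [← hu, Ring.inverse_unit]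
  simpa [Function.comp_def] using hF.comp_hasDerivAt t hP

section Operator

variable {E : Type*} [NormedAddCommGroup E] [NormedSpace ℝ E]

theorem ne_zero_of_hasDerivWithinAt_clm_apply {A : ℝ → E →L[ℝ] E} {x : ℝ → E} {t₀ T : ℝ}
    (hA : ContinuousOn A (Ici t₀))
    (hx : ∀ t ∈ Ici t₀, HasDerivWithinAt x (A t (x t)) (Ici t₀) t) (hx0 : x t₀ ≠ 0)
    (hT : t₀ ≤ T) : x T ≠ 0 := by
  intro hxT
  obtain ⟨C, hC⟩ := isCompact_Icc.exists_bound_of_continuousOn (hA.mono Icc_subset_Ici_self)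
  have hLip : ∀ t ∈ Ioc t₀ T, LipschitzOnWith C.toNNReal (A t) univ := fun t ht =>
    ((A t).lipschitz.weaken <| by
      rw [← NNReal.coe_le_coe, coe_nnnorm]
      exact (hC t ⟨ht.1.le, ht.2⟩).trans (Real.le_coe_toNNReal C)).lipschitzOnWith
  have hx' : ∀ t ∈ Ioc t₀ T, HasDerivWithinAt x (A t (x t)) (Iic t) t := fun t ht =>
    (hx t ht.1.le).mono_of_mem_nhdsWithin (mem_nhdsWithin_of_mem_nhds (Ici_mem_nhds ht.1))
  have hzero : ∀ t ∈ Ioc t₀ T, HasDerivWithinAt (fun _ => 0) (A t 0) (Iic t) t :=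
    fun t _ => by simpa using hasDerivWithinAt_const t (Iic t) (0 : E)
  have h := ODE_solution_unique_of_mem_Icc_left hLip
    (fun t ht => (hx t ht.1).continuousWithinAt.mono Icc_subset_Ici_self) hx'
    (fun _ _ => mem_univ _) continuousOn_const hzero (fun _ _ => mem_univ _) hxT
  exact hx0 (h ⟨le_rfl, hT⟩)

variable [CompleteSpace E]

theorem norm_ringInverse_one_sub_le_two {b : E →L[ℝ] E} (hb : ‖b‖ ≤ 1 / 2) :
    ‖Ring.inverse (1 - b)‖ ≤ 2 := by
  rw [← geom_series_eq_inverse b (by linarith)]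
  refine (tsum_geometric_le_of_norm_lt_one b (by linarith)).trans ?_
  have h1 : ‖(1 : E →L[ℝ] E)‖ ≤ 1 := ContinuousLinearMap.norm_id_le
  have h2 : (1 - ‖b‖)⁻¹ ≤ 2 := by
    rw [inv_le_comm₀ (by linarith) two_pos]; linarith
  linarith

theorem hasDerivAt_ringInverse_one_sub_apply {A : E →L[ℝ] E} {B : ℝ → E →L[ℝ] E} {x : ℝ → E}
    {t : ℝ} (hB : HasDerivAt B (-A) t) (hx : HasDerivAt x (A (x t)) t)
    (hunit : IsUnit (1 - B t)) :
    HasDerivAt (fun s => Ring.inverse (1 - B s) (x s))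
      (-(Ring.inverse (1 - B t) ((A * B t) (Ring.inverse (1 - B t) (x t))))) t := by
  have hP : HasDerivAt (fun s => 1 - B s) A t := by simpa using hB.const_sub 1
  convert (hP.ringInverse hunit).clm_apply hx using 1
  set y := Ring.inverse (1 - B t) (x t)
  have hxy : x t = (1 - B t) y := by
    rw [← mul_apply_eq_comp, Ring.mul_inverse_cancel _ hunit, one_apply_eq_self]
  have hyy : Ring.inverse (1 - B t) ((1 - B t) y) = y := by
    rw [← mul_apply_eq_comp, Ring.inverse_mul_cancel _ hunit, one_apply_eq_self]
  simp only [_root_.neg_apply, mul_apply_eq_comp]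
  rw [hxy, hyy, _root_.sub_apply, map_sub, map_sub]
  simp only [one_apply_eq_self]
  abel

theorem exists_tendsto_ringInverse_one_sub_apply {A B : ℝ → E →L[ℝ] E} {x : ℝ → E} {a : ℝ}
    (hB : ∀ t ∈ Ici a, HasDerivAt B (-A t) t) (hB_small : ∀ t ∈ Ici a, ‖B t‖ ≤ 1 / 2)
    (hAB : IntegrableOn (fun t => A t * B t) (Ici a))
    (hAB_small : ∫ t in Ici a, ‖A t * B t‖ ≤ 1 / 8)
    (hx : ∀ t ∈ Ici a, HasDerivAt x (A t (x t)) t) :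
    ∃ L, Tendsto (fun t => Ring.inverse (1 - B t) (x t)) atTop (𝓝 L) ∧
      ‖L - Ring.inverse (1 - B a) (x a)‖ ≤ ‖Ring.inverse (1 - B a) (x a)‖ / 3 := by
  have hunit : ∀ t ∈ Ici a, IsUnit (1 - B t) := fun t ht =>
    isUnit_one_sub_of_norm_lt_one ((hB_small t ht).trans_lt (by norm_num))
  refine exists_tendsto_of_hasDerivAt_of_norm_le_mul
    (fun t ht => hasDerivAt_ringInverse_one_sub_apply (hB t ht) (hx t ht) (hunit t ht))
    (k := fun t => 2 * ‖A t * B t‖) (fun t ht => ?_) (fun t _ => by positivity)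
    (hAB.norm.const_mul 2) (by rw [integral_const_mul]; linarith)
  rw [norm_neg]
  calc _ ≤ ‖Ring.inverse (1 - B t)‖ * (‖A t * B t‖ * ‖Ring.inverse (1 - B t) (x t)‖) :=
        (ContinuousLinearMap.le_opNorm _ _).trans
          (mul_le_mul_of_nonneg_left (ContinuousLinearMap.le_opNorm _ _) (norm_nonneg _))
    _ ≤ 2 * (‖A t * B t‖ * ‖Ring.inverse (1 - B t) (x t)‖) :=
        mul_le_mul_of_nonneg_right (norm_ringInverse_one_sub_le_two (hB_small t ht))
          (by positivity)
    _ = _ := by ring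

theorem exists_ne_zero_tendsto_of_integrableOn_mul {A B : ℝ → E →L[ℝ] E} {x : ℝ → E} {t₀ : ℝ}
    (hA : ContinuousOn A (Ici t₀)) (hB : ∀ t ∈ Ioi t₀, HasDerivAt B (-A t) t)
    (hB0 : Tendsto B atTop (𝓝 0)) (hAB : IntegrableOn (fun t => A t * B t) (Ici t₀))
    (hx : ∀ t ∈ Ici t₀, HasDerivWithinAt x (A t (x t)) (Ici t₀) t) (hx0 : x t₀ ≠ 0) :
    ∃ L ≠ 0, Tendsto x atTop (𝓝 L) := by
  obtain ⟨a, ha, hB_small, hAB_small⟩ : ∃ a, t₀ < a ∧ (∀ t ∈ Ici a, ‖B t‖ ≤ 1 / 2) ∧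
      ∫ t in Ici a, ‖A t * B t‖ ≤ 1 / 8 := by
    have hB_ev : ∀ᶠ t in atTop, ‖B t‖ ≤ 1 / 2 :=
      (tendsto_norm_zero.comp hB0).eventually (ge_mem_nhds (by norm_num))
    have htail : ∀ᶠ t in atTop, ∫ s in Ioi t, ‖A s * B s‖ ≤ 1 / 8 :=
      (tendsto_integral_Ioi_zero tendsto_id).eventually (ge_mem_nhds (by norm_num))
    obtain ⟨b, hb⟩ := eventually_atTop.1 (hB_ev.and htail)
    refine ⟨max b (t₀ + 1), by linarith [le_max_right b (t₀ + 1)],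
      fun t ht => (hb t ((le_max_left _ _).trans ht)).1, ?_⟩
    rw [integral_Ici_eq_integral_Ioi]
    exact (hb _ (le_max_left _ _)).2
  have ht₀ : ∀ t ∈ Ici a, t₀ < t := fun t ht => ha.trans_le ht
  obtain ⟨L, hyL, hL⟩ := exists_tendsto_ringInverse_one_sub_apply
    (fun t ht => hB t (ht₀ t ht)) hB_small (hAB.mono_set (Ici_subset_Ici.2 ha.le)) hAB_small
    (fun t ht => (hx t (ht₀ t ht).le).hasDerivAt (Ici_mem_nhds (ht₀ t ht)))
  set y := fun t => Ring.inverse (1 - B t) (x t)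
  have hxy : ∀ t ∈ Ici a, (1 - B t) (y t) = x t := fun t ht => by
    rw [← mul_apply_eq_comp, Ring.mul_inverse_cancel _
      (isUnit_one_sub_of_norm_lt_one ((hB_small t ht).trans_lt (by norm_num))), one_apply_eq_self]
  have hya : y a ≠ 0 := fun h => ne_zero_of_hasDerivWithinAt_clm_apply hA hx hx0 ha.le
    (by rw [← hxy a self_mem_Ici, h, map_zero])
  refine ⟨L, fun hL0 => hya ?_, ?_⟩
  · rw [hL0, zero_sub, norm_neg] at hL
    exact norm_le_zero_iff.1 (by linarith [norm_nonneg (y a)])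
  · have h1B : Tendsto (fun t => 1 - B t) atTop (𝓝 1) := by
      simpa using (tendsto_const_nhds (x := (1 : E →L[ℝ] E))).sub hB0
    have h := (isBoundedBilinearMap_apply.continuous.tendsto ((1 : E →L[ℝ] E), L)).comp
      (h1B.prodMk_nhds hyL)
    rw [one_apply_eq_self] at h
    refine h.congr' ?_
    filter_upwards [eventually_ge_atTop a] with t ht
    exact hxy t ht

end Operator

namespace Matrix

variable {ι : Type*} [Fintype ι]

/-- `Matrix ι ι ℂ` carries no norm instance, so the domain is the underlying function type with its
sup norm. -/
noncomputable def mulVecCLM : (ι → ι → ℂ) →L[ℝ] (ι → ℂ) →L[ℝ] ι → ℂ :=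
  LinearMap.toContinuousLinearMap
    { toFun := fun M => LinearMap.toContinuousLinearMap ((mulVecLin (of M)).restrictScalars ℝ)
      map_add' := fun M N => by ext; simp [← of_add_of]
      map_smul' := fun c M => by ext; simp [← smul_of] }

@[simp]
theorem mulVecCLM_apply (M : Matrix ι ι ℂ) (v : ι → ℂ) : mulVecCLM M v = M *ᵥ v := rfl

theorem mulVecCLM_mul (M N : Matrix ι ι ℂ) : mulVecCLM (M * N) = mulVecCLM M * mulVecCLM N := by
  ext v : 1
  simp [mulVec_mulVec]

section Entrywise

variable {M : ℝ → Matrix ι ι ℂ}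

theorem continuousOn_mulVecCLM {s : Set ℝ} (hM : ∀ i j, ContinuousOn (fun t => M t i j) s) :
    ContinuousOn (fun t => mulVecCLM (M t)) s :=
  mulVecCLM.continuous.comp_continuousOn (continuousOn_pi.2 fun i => continuousOn_pi.2 (hM i))

theorem hasDerivAt_mulVecCLM {M' : Matrix ι ι ℂ} {t : ℝ}
    (hM : ∀ i j, HasDerivAt (fun t => M t i j) (M' i j) t) :
    HasDerivAt (fun t => mulVecCLM (M t)) (mulVecCLM M') t :=
  mulVecCLM.hasFDerivAt.comp_hasDerivAt t (hasDerivAt_pi.2 fun i => hasDerivAt_pi.2 (hM i))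

theorem tendsto_mulVecCLM {l : Filter ℝ} {M₀ : Matrix ι ι ℂ}
    (hM : ∀ i j, Tendsto (fun t => M t i j) l (𝓝 (M₀ i j))) :
    Tendsto (fun t => mulVecCLM (M t)) l (𝓝 (mulVecCLM M₀)) :=
  (mulVecCLM.continuous.tendsto M₀).comp
    (tendsto_pi_nhds.2 fun i => tendsto_pi_nhds.2 (hM i))

theorem integrableOn_mulVecCLM {s : Set ℝ} (hM : ∀ i j, IntegrableOn (fun t => M t i j) s) :
    IntegrableOn (fun t => mulVecCLM (M t)) s := by
  have hM' : IntegrableOn (ε := ι → ι → ℂ) M s :=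
    Integrable.of_eval fun i => Integrable.of_eval (hM i)
  exact mulVecCLM.integrable_comp hM'

end Entrywise

end Matrix

theorem dunkl_stmt1_general (n : ℕ) (t₀ : ℝ)
    (A B : ℝ → Matrix (Fin n) (Fin n) ℂ)
    (hAc : ∀ i j, ContinuousOn (fun t => A t i j) (Ici t₀))
    (hB : ∀ t ∈ Ici t₀, ∀ i j,
      Tendsto (fun T => ∫ s in t..T, A s i j) atTop (nhds (B t i j)))
    (hAB : ∀ i j, IntegrableOn (fun t => (A t * B t) i j) (Ici t₀))
    (x : ℝ → Fin n → ℂ)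
    (hx : ∀ t ∈ Ici t₀, HasDerivWithinAt x (A t *ᵥ x t) (Ici t₀) t)
    (hx0 : x t₀ ≠ 0) :
    ∃ L : Fin n → ℂ, L ≠ 0 ∧ Tendsto x atTop (nhds L) := by
  have hB' : ∀ t ∈ Ioi t₀, HasDerivAt (fun t => mulVecCLM (B t)) (-mulVecCLM (A t)) t :=
    fun t ht => (hasDerivAt_mulVecCLM (M' := -A t) fun i j =>
      hasDerivAt_of_tendsto_intervalIntegral (hAc i j) (fun s hs => hB s hs i j) ht).congr_deriv
        (map_neg mulVecCLM (A t))
  have hB0 : Tendsto (fun t => mulVecCLM (B t)) atTop (𝓝 0) :=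
    (map_zero (mulVecCLM (ι := Fin n))) ▸ tendsto_mulVecCLM (M₀ := 0) fun i j =>
      tendsto_zero_of_tendsto_intervalIntegral (hAc i j) (fun s hs => hB s hs i j)
  exact exists_ne_zero_tendsto_of_integrableOn_mul (continuousOn_mulVecCLM hAc) hB' hB0
    (by simpa [mulVecCLM_mul] using integrableOn_mulVecCLM hAB) (by simpa using hx) hx0

/-- Levinson/Wintner-type asymptotic integration: under the integrability conditions
on `A` and `Ã(t) = ∫_t^∞ A(s) ds`, every solution of `x' = A(t)x` that is nonzero at `t₀`
has a nonzero limit at infinity. -/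
theorem dunkl_stmt1 (n : ℕ) (hn : 1 ≤ n) (t₀ : ℝ)
    (A B : ℝ → Matrix (Fin n) (Fin n) ℂ)
    (hAc : ∀ i j, ContinuousOn (fun t => A t i j) (Ici t₀))
    (hB : ∀ t ∈ Ici t₀, ∀ i j,
      Tendsto (fun T => ∫ s in t..T, A s i j) atTop (nhds (B t i j)))
    (hAB : ∀ i j, IntegrableOn (fun t => (A t * B t) i j) (Ici t₀))
    (x : ℝ → Fin n → ℂ)
    (hx : ∀ t ∈ Ici t₀, HasDerivWithinAt x (A t *ᵥ x t) (Ici t₀) t)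
    (hx0 : x t₀ ≠ 0) :
    ∃ L : Fin n → ℂ, L ≠ 0 ∧ Tendsto x atTop (nhds L) :=
  dunkl_stmt1_general n t₀ A B hAc hB hAB x hx hx0
end

section
/- Let k > 0 be real and y ∈ ℝ, and define f : ℝ → ℝ by f(x) = D_k(xy). Then f(0) = 1, f is differentiable on ℝ, and for every x ≠ 0 it satisfies the rank-one Dunkl eigenvalue equation f′(x) + k·(f(x) − f(−x))/x = y·f(x). -/
/-!
Write `w(t) = (1 - t)^(k-1) (1 + t)^k`, so that `D_k(z) = c_k ∫_{-1}^1 e^{tz} w(t) dt`.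
The normalisation `D_k(0) = 1` is a Beta integral combined with Legendre's duplication formula.
`D_k` is entire, with `D_k'(z) = c_k ∫ t e^{tz} w(t) dt`. The Dunkl equation comes from one
integration by parts: `u(t) = (1 - t)^k (1 + t)^k = (1 - t) w(t)` vanishes at `±1` and
`u'(t) = k (w(-t) - w(t))`, so `∫ (u e^{tz})' = 0` reads
`z D_k'(z) + k (D_k(z) - D_k(-z)) = z D_k(z)`, the substitution `t ↦ -t` turning
`∫ e^{tz} w(-t)` into `D_k(-z) / c_k`. Put `z = xy` and divide by `x`.
-/

open MeasureTheory Filter Set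

/-- The rank-one Dunkl kernel, defined by its integral representation. -/
noncomputable def Dk (k : ℝ) (u : ℂ) : ℂ :=
  ((Real.Gamma (k + 1/2) / (Real.Gamma (1/2) * Real.Gamma k) : ℝ) : ℂ) *
    ∫ t in Icc (-1 : ℝ) 1,
      Complex.exp ((t : ℂ) * u) * (((1 - t) ^ (k - 1) * (1 + t) ^ k : ℝ) : ℂ)

theorem intervalIntegrable_one_sub_rpow_mul_one_add_rpow {p q : ℝ} (hp : -1 < p) (hq : -1 < q) :
    IntervalIntegrable (fun t : ℝ => (1 - t) ^ p * (1 + t) ^ q) volume (-1) 1 := by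
  have hleft : IntervalIntegrable (fun t : ℝ => (1 + t) ^ q) volume (-1) 0 := by
    simpa [add_comm] using
      (intervalIntegral.intervalIntegrable_rpow' (a := 0) (b := 1) hq).comp_add_right 1
  have hright : IntervalIntegrable (fun t : ℝ => (1 - t) ^ p) volume 0 1 := by
    simpa using
      ((intervalIntegral.intervalIntegrable_rpow' (a := 0) (b := 1) hp).comp_sub_left 1).symm
  refine (hleft.continuousOn_mul fun t ht => ?_).trans (hright.mul_continuousOn fun t ht => ?_)
  · rw [uIcc_of_le (by norm_num)] at ht
    exact ((Real.continuousAt_rpow_const _ p (Or.inl (by linarith [ht.2]))).comp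
      (by fun_prop)).continuousWithinAt
  · rw [uIcc_of_le (by norm_num)] at ht
    exact ((Real.continuousAt_rpow_const _ q (Or.inl (by linarith [ht.1]))).comp
      (by fun_prop)).continuousWithinAt

theorem integral_rpow_mul_one_sub_rpow {a b : ℝ} (ha : 0 < a) (hb : 0 < b) :
    ∫ s in (0 : ℝ)..1, s ^ (a - 1) * (1 - s) ^ (b - 1) = ProbabilityTheory.beta a b := by
  have h : Complex.betaIntegral a b = ↑(∫ s in (0 : ℝ)..1, s ^ (a - 1) * (1 - s) ^ (b - 1)) := by
    rw [Complex.betaIntegral, ← intervalIntegral.integral_ofReal]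
    refine intervalIntegral.integral_congr fun s hs => ?_
    rw [uIcc_of_le zero_le_one] at hs
    push_cast [Complex.ofReal_cpow hs.1, Complex.ofReal_cpow (sub_nonneg.2 hs.2)]
    rfl
  rw [ProbabilityTheory.beta_eq_betaIntegralReal a b ha hb, h, Complex.ofReal_re]

theorem integral_one_sub_rpow_mul_one_add_rpow {a b : ℝ} (ha : 0 < a) (hb : 0 < b) :
    ∫ t in (-1 : ℝ)..1, (1 - t) ^ (a - 1) * (1 + t) ^ (b - 1) =
      2 ^ (a + b - 1) * ProbabilityTheory.beta b a := by
  have hsub := intervalIntegral.smul_integral_comp_mul_add (a := 0) (b := 1)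
    (fun t : ℝ => (1 - t) ^ (a - 1) * (1 + t) ^ (b - 1)) 2 (-1)
  norm_num at hsub
  rw [← hsub, ← integral_rpow_mul_one_sub_rpow hb ha, ← intervalIntegral.integral_const_mul,
    ← intervalIntegral.integral_const_mul]
  refine intervalIntegral.integral_congr fun s hs => ?_
  rw [uIcc_of_le zero_le_one] at hs
  have h2 : (2 : ℝ) ^ (a + b - 1) = 2 * 2 ^ (a - 1) * 2 ^ (b - 1) := by
    rw [show a + b - 1 = a - 1 + (b - 1) + 1 by ring, Real.rpow_add two_pos,
      Real.rpow_add two_pos, Real.rpow_one]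
    ring
  rw [show 1 - (2 * s + -1) = 2 * (1 - s) by ring,
    Real.mul_rpow zero_le_two (by linarith [hs.2]), Real.mul_rpow zero_le_two hs.1, h2]
  ring

theorem hasDerivAt_integral_cexp_mul {μ : Measure ℝ} {g : ℝ → ℂ} {R : ℝ}
    (hR : ∀ᵐ t ∂μ, |t| ≤ R) (hg : Integrable g μ) (z : ℂ) :
    HasDerivAt (fun z : ℂ => ∫ t, Complex.exp (t * z) * g t ∂μ)
      (∫ t, t * Complex.exp (t * z) * g t ∂μ) z := by
  have hexp_le : ∀ t : ℝ, |t| ≤ R → ∀ w : ℂ, ‖Complex.exp (t * w)‖ ≤ Real.exp (R * ‖w‖) := by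
    intro t ht w
    rw [Complex.norm_exp, Real.exp_le_exp, Complex.re_ofReal_mul]
    calc t * w.re ≤ |t| * ‖w‖ :=
          (le_abs_self _).trans (by rw [abs_mul]; gcongr; exact Complex.abs_re_le_norm w)
      _ ≤ R * ‖w‖ := by gcongr
  have hgm := hg.aestronglyMeasurable
  have hR0 : ∀ᵐ t ∂μ, 0 ≤ R := hR.mono fun t ht => (abs_nonneg t).trans ht
  refine (hasDerivAt_integral_of_dominated_loc_of_deriv_le (Metric.ball_mem_nhds z one_pos)
    (F := fun w t => Complex.exp (t * w) * g t) (F' := fun w t => t * Complex.exp (t * w) * g t)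
    (bound := fun t => R * Real.exp (R * (‖z‖ + 1)) * ‖g t‖)
    (.of_forall fun w => by fun_prop) ?_ (by fun_prop) ?_ (hg.norm.const_mul _) ?_).2
  · refine hg.bdd_mul (c := Real.exp (R * ‖z‖)) (by fun_prop) ?_
    filter_upwards [hR] with t ht using hexp_le t ht z
  · filter_upwards [hR, hR0] with t ht hR0 w hw
    rw [norm_mul, norm_mul, Complex.norm_real, Real.norm_eq_abs]
    have hw' : ‖w‖ ≤ ‖z‖ + 1 := by
      have := norm_le_norm_add_norm_sub' w z
      rw [Metric.mem_ball, dist_eq_norm] at hw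
      linarith
    gcongr
    exact (hexp_le t ht w).trans (by gcongr)
  · refine .of_forall fun t w _ => ?_
    simpa [mul_comm] using ((hasDerivAt_id w).const_mul (t : ℂ)).cexp.mul_const (g t)

noncomputable def dunklConst (k : ℝ) : ℝ :=
  Real.Gamma (k + 1/2) / (Real.Gamma (1/2) * Real.Gamma k)

noncomputable def dunklWeight (k t : ℝ) : ℝ := (1 - t) ^ (k - 1) * (1 + t) ^ k

theorem Dk_eq_intervalIntegral (k : ℝ) (u : ℂ) :
    Dk k u = dunklConst k * ∫ t in (-1 : ℝ)..1, Complex.exp (t * u) * dunklWeight k t := by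
  rw [Dk, intervalIntegral.integral_of_le (by norm_num), integral_Icc_eq_integral_Ioc]
  rfl

theorem dunklWeight_neg (k t : ℝ) : dunklWeight k (-t) = (1 - t) ^ k * (1 + t) ^ (k - 1) := by
  rw [dunklWeight, sub_neg_eq_add, ← sub_eq_add_neg, mul_comm]

section DunklKernel

variable {k : ℝ}

theorem one_sub_mul_dunklWeight (hk : k ≠ 0) {t : ℝ} (ht : t ≤ 1) :
    (1 - t) * dunklWeight k t = (1 - t) ^ k * (1 + t) ^ k := by
  have h := Real.rpow_add_one' (sub_nonneg.2 ht) (y := k - 1) (by simpa using hk)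
  rw [sub_add_cancel] at h
  rw [dunklWeight, h]
  ring

theorem hasDerivAt_one_sub_rpow_mul_one_add_rpow {t : ℝ} (ht : t ∈ Ioo (-1 : ℝ) 1) :
    HasDerivAt (fun t : ℝ => (1 - t) ^ k * (1 + t) ^ k)
      (k * (dunklWeight k (-t) - dunklWeight k t)) t := by
  have h₁ := ((hasDerivAt_id t).const_sub 1).rpow_const (p := k)
    (Or.inl (by simp; linarith [ht.2]))
  have h₂ := ((hasDerivAt_id t).const_add 1).rpow_const (p := k)
    (Or.inl (by simp; linarith [ht.1]))
  refine (h₁.mul h₂).congr_deriv ?_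
  rw [dunklWeight_neg, dunklWeight]
  simp only [id]
  ring

theorem integral_dunklWeight (hk : 0 < k) :
    ∫ t in (-1 : ℝ)..1, dunklWeight k t =
      Real.Gamma (1 / 2) * Real.Gamma k / Real.Gamma (k + 1 / 2) := by
  have hbeta := integral_one_sub_rpow_mul_one_add_rpow hk (b := k + 1) (by linarith)
  rw [add_sub_cancel_right] at hbeta
  rw [show dunklWeight k = fun t => (1 - t) ^ (k - 1) * (1 + t) ^ k from rfl, hbeta,
    ProbabilityTheory.beta, Real.Gamma_add_one hk.ne', show k + 1 + k = 2 * k + 1 by ring,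
    Real.Gamma_add_one (by positivity), Real.Gamma_one_half_eq,
    eq_div_iff (Real.Gamma_pos_of_pos (by positivity)).ne']
  have hdup := Real.Gamma_mul_Gamma_add_half k
  have h2 : (2 : ℝ) ^ (k + (k + 1) - 1) * 2 ^ (1 - 2 * k) = 2 := by
    rw [← Real.rpow_add two_pos]
    ring_nf
    exact Real.rpow_one 2
  have := Real.Gamma_pos_of_pos (show 0 < 2 * k by positivity)
  generalize Real.Gamma (k + 1 / 2) = G at *
  generalize Real.Gamma (2 * k) = G2 at *
  field_simp
  linear_combination 2 ^ (k + (k + 1) - 1) * hdup + G2 * √Real.pi * h2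

theorem Dk_zero (hk : 0 < k) : Dk k 0 = 1 := by
  simp only [Dk_eq_intervalIntegral, mul_zero, Complex.exp_zero, one_mul,
    intervalIntegral.integral_ofReal, integral_dunklWeight hk, dunklConst]
  have := Real.Gamma_pos_of_pos hk
  have := Real.Gamma_pos_of_pos (show 0 < k + 1 / 2 by positivity)
  have := Real.Gamma_pos_of_pos (show (0 : ℝ) < 1 / 2 by positivity)
  norm_cast
  field_simp

theorem intervalIntegrable_dunklWeight (hk : 0 < k) :
    IntervalIntegrable (fun t => (dunklWeight k t : ℂ)) volume (-1) 1 := by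
  have h := intervalIntegrable_one_sub_rpow_mul_one_add_rpow (p := k - 1) (q := k)
    (by linarith) (by linarith)
  rw [intervalIntegrable_iff] at h ⊢
  exact h.ofReal

theorem intervalIntegrable_dunklWeight_neg (hk : 0 < k) :
    IntervalIntegrable (fun t => (dunklWeight k (-t) : ℂ)) volume (-1) 1 := by
  simpa using
    ((IntervalIntegrable.iff_comp_neg (by simp)).1 (intervalIntegrable_dunklWeight hk)).symm

theorem hasDerivAt_Dk (hk : 0 < k) (z : ℂ) :
    HasDerivAt (Dk k)
      (dunklConst k * ∫ t in (-1 : ℝ)..1, t * Complex.exp (t * z) * dunklWeight k t) z := by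
  have hR : ∀ᵐ t ∂volume.restrict (Ioc (-1 : ℝ) 1), |t| ≤ 1 :=
    ae_restrict_of_forall_mem measurableSet_Ioc fun t ht => abs_le.2 ⟨ht.1.le, ht.2⟩
  have hD := (hasDerivAt_integral_cexp_mul hR (intervalIntegrable_dunklWeight hk).1 z).const_mul
    (dunklConst k : ℂ)
  simpa only [← intervalIntegral.integral_of_le (show (-1 : ℝ) ≤ 1 by norm_num),
    ← Dk_eq_intervalIntegral] using hD

theorem integral_cexp_dunklWeight_eigen_equation (hk : 0 < k) (z : ℂ) :
    z * (∫ t in (-1 : ℝ)..1, t * Complex.exp (t * z) * dunklWeight k t) +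
      k * ((∫ t in (-1 : ℝ)..1, Complex.exp (t * z) * dunklWeight k t) -
        ∫ t in (-1 : ℝ)..1, Complex.exp (t * z) * dunklWeight k (-t)) =
      z * ∫ t in (-1 : ℝ)..1, Complex.exp (t * z) * dunklWeight k t := by
  set E : ℝ → ℂ := fun t => Complex.exp (t * z)
  have hE : Continuous E := by fun_prop
  have hEw := (intervalIntegrable_dunklWeight hk).continuousOn_mul hE.continuousOn
  have hEw' := (intervalIntegrable_dunklWeight_neg hk).continuousOn_mul hE.continuousOn
  have htEw := (intervalIntegrable_dunklWeight hk).continuousOn_mul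
    (show Continuous fun t : ℝ => (t : ℂ) * E t by fun_prop).continuousOn
  have hu : Continuous fun t : ℝ => (((1 - t) ^ k * (1 + t) ^ k : ℝ) : ℂ) * E t := by
    have := Real.continuous_rpow_const hk.le
    fun_prop
  have hderiv : ∀ t ∈ Ioo (-1 : ℝ) 1,
      HasDerivAt (fun t : ℝ => (((1 - t) ^ k * (1 + t) ^ k : ℝ) : ℂ) * E t)
        (k * (E t * dunklWeight k (-t)) - k * (E t * dunklWeight k t) +
          (z * (E t * dunklWeight k t) - z * (t * E t * dunklWeight k t))) t := by
    intro t ht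
    have hEt : HasDerivAt E (E t * z) t := by
      simpa using ((hasDerivAt_id (t : ℂ)).mul_const z).cexp.comp_ofReal
    refine ((hasDerivAt_one_sub_rpow_mul_one_add_rpow ht).ofReal_comp.mul hEt).congr_deriv ?_
    rw [← one_sub_mul_dunklWeight hk.ne' ht.2.le]
    push_cast
    ring
  have hFTC := intervalIntegral.integral_eq_sub_of_hasDerivAt_of_le (by norm_num)
    hu.continuousOn hderiv
    (((hEw'.const_mul _).sub (hEw.const_mul _)).add ((hEw.const_mul _).sub (htEw.const_mul _)))
  rw [intervalIntegral.integral_add ((hEw'.const_mul _).sub (hEw.const_mul _))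
      ((hEw.const_mul _).sub (htEw.const_mul _)),
    intervalIntegral.integral_sub (hEw'.const_mul _) (hEw.const_mul _),
    intervalIntegral.integral_sub (hEw.const_mul _) (htEw.const_mul _)] at hFTC
  norm_num [Real.zero_rpow hk.ne'] at hFTC
  linear_combination -hFTC

theorem Dk_eigen_equation (hk : 0 < k) (z : ℂ) :
    z * deriv (Dk k) z + k * (Dk k z - Dk k (-z)) = z * Dk k z := by
  have hneg : ∫ t in (-1 : ℝ)..1, Complex.exp (t * -z) * dunklWeight k t =
      ∫ t in (-1 : ℝ)..1, Complex.exp (t * z) * dunklWeight k (-t) := by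
    simpa using intervalIntegral.integral_comp_neg (a := -1) (b := 1)
      (fun t : ℝ => Complex.exp (t * z) * dunklWeight k (-t))
  rw [(hasDerivAt_Dk hk z).deriv, Dk_eq_intervalIntegral, Dk_eq_intervalIntegral, hneg]
  linear_combination (dunklConst k : ℂ) * integral_cexp_dunklWeight_eigen_equation hk z

end DunklKernel

/-- `x ↦ D_k(xy)` is the solution of the rank-one Dunkl eigenvalue problem
`T(k)f = y·f`, `f(0) = 1`, where `T(k)f(x) = f'(x) + k (f(x) - f(-x))/x`. -/
theorem dunkl_stmt10 (k : ℝ) (hk : 0 < k) (y : ℝ)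
    (f : ℝ → ℂ) (hf : ∀ x : ℝ, f x = Dk k ((x : ℂ) * (y : ℂ))) :
    f 0 = 1 ∧ Differentiable ℝ f ∧
      ∀ x : ℝ, x ≠ 0 →
        deriv f x + (k : ℂ) * (f x - f (-x)) / (x : ℂ) = (y : ℂ) * f x := by
  obtain rfl : f = fun x : ℝ => Dk k (x * y) := funext hf
  have hderiv (x : ℝ) :
      HasDerivAt (fun x : ℝ => Dk k (x * y)) (deriv (Dk k) (x * y) * y) x := by
    have hmul : HasDerivAt (fun w : ℂ => w * y) y (x : ℂ) := by
      simpa using (hasDerivAt_id (x : ℂ)).mul_const (y : ℂ)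
    exact ((hasDerivAt_Dk hk _).differentiableAt.hasDerivAt.comp (x : ℂ) hmul).comp_ofReal
  refine ⟨by simpa using Dk_zero hk, fun x => (hderiv x).differentiableAt, fun x hx => ?_⟩
  have hx' : (x : ℂ) ≠ 0 := by exact_mod_cast hx
  rw [(hderiv x).deriv]
  beta_reduce
  rw [Complex.ofReal_neg, neg_mul]
  field_simp
  linear_combination Dk_eigen_equation hk (x * y)
end
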